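/- arXiv:1708.08207 — 2 statements merged into one kernel-verified Lean document; each statement's English description precedes it below -/
import Mathlib

section
/- For m, n ≥ 4, in the line graph L(M_{m,n}) of the generalized Möbius ladder, the number of edges with one endpoint of degree 5 and the other of degree 6 equals 6(m−1). -/
/-- Directed base relation for the generalized Möbius ladder `M_{m,n}`:
columns are indexed by `ZMod (m-1)` (the end columns of the grid `P_m × P_n`
are identified with a half twist), rows by `Fin n`. -/
def gmlRel (m n : ℕ) (v w : ZMod (m - 1) × Fin n) : Prop :=
  -- vertical edge within a column
  (v.1 = w.1 ∧ v.2.val + 1 = w.2.val) ∨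
  -- ordinary horizontal edge to the next column
  (v.1 ≠ ((m - 2 : ℕ) : ZMod (m - 1)) ∧ w.1 = v.1 + 1 ∧ v.2 = w.2) ∨
  -- twisted horizontal edge from the last column back to the first
  (v.1 = ((m - 2 : ℕ) : ZMod (m - 1)) ∧ w.1 = 0 ∧ v.2.val + w.2.val = n - 1)

/-- The generalized Möbius ladder `M_{m,n}`. -/
def GML (m n : ℕ) : SimpleGraph (ZMod (m - 1) × Fin n) :=
  SimpleGraph.fromRel (gmlRel m n)

/-- Degree of a vertex, defined via `Set.ncard` so that no `Fintype`
instances are needed. -/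
noncomputable def ndeg {V : Type*} (G : SimpleGraph V) (v : V) : ℕ :=
  (G.neighborSet v).ncard

open SimpleGraph in
lemma edgesThrough_eq {V : Type*} (G : SimpleGraph V) (u : V) :
    {z : Sym2 V | z ∈ G.edgeSet ∧ u ∈ z} = (fun w => s(u, w)) '' G.neighborSet u := by
  ext z
  constructor
  · rintro ⟨hz, huz⟩
    refine ⟨Sym2.Mem.other huz, ?_, Sym2.other_spec huz⟩
    have h2 := Sym2.other_spec huz
    rw [SimpleGraph.mem_neighborSet, ← SimpleGraph.mem_edgeSet, h2]
    exact hz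
  · rintro ⟨w, hw, rfl⟩
    exact ⟨hw, Sym2.mem_mk_left u w⟩

open SimpleGraph in
lemma ndeg_lineGraph_add_two {V : Type*} {G : SimpleGraph V} {u v : V} (h : G.Adj u v)
    (hu : (G.neighborSet u).Finite) (hv : (G.neighborSet v).Finite) :
    ndeg G.lineGraph (⟨s(u, v), h⟩ : G.edgeSet) + 2 = ndeg G u + ndeg G v := by
  set e : G.edgeSet := ⟨s(u, v), h⟩ with he
  set A : Set G.edgeSet := {f | u ∈ (f : Sym2 V)} with hA
  set B : Set G.edgeSet := {f | v ∈ (f : Sym2 V)} with hB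
  have hinj : Function.Injective (Subtype.val : G.edgeSet → Sym2 V) := Subtype.val_injective
  have hvalA : Subtype.val '' A = (fun w => s(u, w)) '' G.neighborSet u := by
    rw [← edgesThrough_eq]; ext z; simp only [Set.mem_image, Set.mem_setOf_eq, Subtype.exists,
      exists_and_right, exists_eq_right]; tauto
  have hvalB : Subtype.val '' B = (fun w => s(v, w)) '' G.neighborSet v := by
    rw [← edgesThrough_eq]; ext z; simp only [Set.mem_image, Set.mem_setOf_eq, Subtype.exists,
      exists_and_right, exists_eq_right]; tauto
  have hinju : Function.Injective (fun w : V => s(u, w)) := fun a b hab =>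
    Sym2.congr_right.mp hab
  have hinjv : Function.Injective (fun w : V => s(v, w)) := fun a b hab =>
    Sym2.congr_right.mp hab
  have hAfin : A.Finite := by
    apply Set.Finite.of_finite_image _ hinj.injOn
    rw [hvalA]; exact hu.image _
  have hBfin : B.Finite := by
    apply Set.Finite.of_finite_image _ hinj.injOn
    rw [hvalB]; exact hv.image _
  have hAcard : A.ncard = ndeg G u := by
    rw [ndeg, ← Set.ncard_image_of_injective A hinj, hvalA,
      Set.ncard_image_of_injective _ hinju]
  have hBcard : B.ncard = ndeg G v := by
    rw [ndeg, ← Set.ncard_image_of_injective B hinj, hvalB,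
      Set.ncard_image_of_injective _ hinjv]
  have hABinter : A ∩ B = {e} := by
    ext f
    simp only [Set.mem_inter_iff, hA, hB, Set.mem_setOf_eq, Set.mem_singleton_iff]
    rw [Sym2.mem_and_mem_iff h.ne]
    exact ⟨fun hf => Subtype.ext hf, fun hf => by rw [hf]⟩
  have hNset : G.lineGraph.neighborSet e = (A ∪ B) \ {e} := by
    ext f
    rw [SimpleGraph.mem_neighborSet, SimpleGraph.lineGraph_adj_iff_exists]
    simp only [Set.mem_diff, Set.mem_union, hA, hB, Set.mem_setOf_eq, Set.mem_singleton_iff]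
    constructor
    · rintro ⟨hne, w, hwe, hwf⟩
      simp only [he, Sym2.mem_iff] at hwe
      rcases hwe with rfl | rfl
      · exact ⟨Or.inl hwf, fun hf => hne (hf ▸ rfl)⟩
      · exact ⟨Or.inr hwf, fun hf => hne (hf ▸ rfl)⟩
    · rintro ⟨hmem, hne⟩
      refine ⟨fun hf => hne hf.symm, ?_⟩
      rcases hmem with hm | hm
      · exact ⟨u, by simp [he], hm⟩
      · exact ⟨v, by simp [he], hm⟩
  have heAB : e ∈ A ∪ B := Or.inl (by simp [hA, he])
  have hU : (A ∪ B).ncard + (A ∩ B).ncard = A.ncard + B.ncard :=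
    Set.ncard_union_add_ncard_inter A B hAfin hBfin
  have hD : ((A ∪ B) \ {e}).ncard + 1 = (A ∪ B).ncard :=
    Set.ncard_diff_singleton_add_one heAB (hAfin.union hBfin)
  rw [hABinter, Set.ncard_singleton] at hU
  rw [ndeg, hNset]
  omega



section helpers
variable {m n : ℕ}

lemma zmod_two_ne (hm : 4 ≤ m) : (2 : ZMod (m-1)) ≠ 0 := by
  intro hx
  have : ((2:ℕ) : ZMod (m-1)) = 0 := by exact_mod_cast hx
  rw [ZMod.natCast_eq_zero_iff] at this
  have := Nat.le_of_dvd (by norm_num) this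
  omega

lemma zmod_one_ne (hm : 4 ≤ m) : (1 : ZMod (m-1)) ≠ 0 := by
  intro hx
  have : ((1:ℕ) : ZMod (m-1)) = 0 := by exact_mod_cast hx
  rw [ZMod.natCast_eq_zero_iff] at this
  have := Nat.le_of_dvd (by norm_num) this
  omega

lemma last_col (hm : 4 ≤ m) : ((m - 2 : ℕ) : ZMod (m - 1)) = -1 := by
  have h : m - 2 = (m - 1) - 1 := by omega
  rw [h, Nat.cast_sub (by omega : 1 ≤ m - 1), ZMod.natCast_self, Nat.cast_one, zero_sub]

lemma sub_one_ne_self (hm : 4 ≤ m) (c : ZMod (m-1)) : c - 1 ≠ c := by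
  intro h; exact zmod_one_ne hm (by linear_combination -h)

lemma add_one_ne_self (hm : 4 ≤ m) (c : ZMod (m-1)) : c + 1 ≠ c := by
  intro h; exact zmod_one_ne hm (by linear_combination h)

lemma sub_one_ne_add_one (hm : 4 ≤ m) (c : ZMod (m-1)) : c - 1 ≠ c + 1 := by
  intro h; exact zmod_two_ne hm (by linear_combination -h)

/-- Membership in the neighbour set of `GML m n`. -/
lemma gml_mem_nbr (hm : 4 ≤ m) (hn : 4 ≤ n) (c : ZMod (m-1)) (i : Fin n)
    (w : ZMod (m-1) × Fin n) :
    w ∈ (GML m n).neighborSet (c, i) ↔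
      w = (c - 1, if c = 0 then i.rev else i) ∨
      w = (c + 1, if c = -1 then i.rev else i) ∨
      (w.1 = c ∧ (w.2.val + 1 = i.val ∨ i.val + 1 = w.2.val)) := by
  have hrev : (i.rev : ℕ) = n - 1 - i.val := by
    rw [Fin.val_rev]; omega
  have hiv : i.val < n := i.isLt
  obtain ⟨w1, w2⟩ := w
  rw [SimpleGraph.mem_neighborSet, GML, SimpleGraph.fromRel_adj]
  unfold gmlRel
  rw [last_col hm]
  simp only [ne_eq, Prod.mk.injEq, Prod.ext_iff]
  constructor
  · rintro ⟨hne, (H | H | H) | (H | H | H)⟩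
    · exact Or.inr (Or.inr ⟨H.1.symm, Or.inr H.2⟩)
    · refine Or.inr (Or.inl ⟨H.2.1, ?_⟩)
      rw [if_neg H.1]; exact H.2.2.symm
    · refine Or.inr (Or.inl ⟨by rw [H.2.1, H.1]; ring, ?_⟩)
      rw [if_pos H.1]
      exact Fin.ext (by omega)
    · exact Or.inr (Or.inr ⟨H.1, Or.inl H.2⟩)
    · refine Or.inl ⟨by rw [H.2.1]; ring, ?_⟩
      have hc0 : ¬ c = 0 := by
        intro h0; apply H.1
        have := H.2.1; rw [h0] at this
        linear_combination -this
      rw [if_neg hc0]; exact H.2.2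
    · refine Or.inl ⟨by rw [H.1, H.2.1]; ring, ?_⟩
      rw [if_pos H.2.1]
      exact Fin.ext (by omega)
  · rintro (⟨h1, h2⟩ | ⟨h1, h2⟩ | ⟨h1, h2⟩)
    · have hne : ¬(c = w1 ∧ i = w2) := by
        rintro ⟨e1, _⟩; rw [h1] at e1; exact sub_one_ne_self hm c e1.symm
      by_cases hc0 : c = 0
      · rw [if_pos hc0] at h2
        refine ⟨hne, Or.inr (Or.inr (Or.inr ⟨by rw [h1, hc0]; ring, hc0, ?_⟩))⟩
        rw [h2, hrev]; omega
      · rw [if_neg hc0] at h2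
        refine ⟨hne, Or.inr (Or.inr (Or.inl ⟨?_, by rw [h1]; ring, h2⟩))⟩
        rw [h1]; intro hE
        apply hc0; linear_combination hE
    · have hne : ¬(c = w1 ∧ i = w2) := by
        rintro ⟨e1, _⟩; rw [h1] at e1; exact add_one_ne_self hm c e1.symm
      by_cases hc1 : c = -1
      · rw [if_pos hc1] at h2
        refine ⟨hne, Or.inl (Or.inr (Or.inr ⟨hc1, by rw [h1, hc1]; ring, ?_⟩))⟩
        rw [h2, hrev]; omega
      · rw [if_neg hc1] at h2
        exact ⟨hne, Or.inl (Or.inr (Or.inl ⟨hc1, h1, h2.symm⟩))⟩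
    · rcases h2 with h2 | h2
      · refine ⟨?_, Or.inr (Or.inl ⟨h1, h2⟩)⟩
        rintro ⟨_, e2⟩; rw [e2] at h2; omega
      · refine ⟨?_, Or.inl (Or.inl ⟨h1.symm, h2⟩)⟩
        rintro ⟨_, e2⟩; rw [e2] at h2; omega

lemma gml_nbr_finite (hm : 4 ≤ m) (v : ZMod (m-1) × Fin n) :
    ((GML m n).neighborSet v).Finite := by
  haveI : NeZero (m - 1) := ⟨by omega⟩
  exact Set.toFinite _

lemma gml_nbr_set_zero (hm : 4 ≤ m) (hn : 4 ≤ n) (c : ZMod (m-1)) (i : Fin n)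
    (hi : i.val = 0) :
    (GML m n).neighborSet (c, i) =
      {(c - 1, if c = 0 then i.rev else i), (c + 1, if c = -1 then i.rev else i),
        (c, ⟨1, by omega⟩)} := by
  ext w
  rw [gml_mem_nbr hm hn]
  simp only [Set.mem_insert_iff, Set.mem_singleton_iff]
  constructor
  · rintro (h | h | ⟨h1, h2 | h2⟩)
    · exact Or.inl h
    · exact Or.inr (Or.inl h)
    · omega
    · exact Or.inr (Or.inr (Prod.ext_iff.mpr ⟨h1, Fin.ext (by simp; omega)⟩))
  · rintro (rfl | rfl | rfl)
    · exact Or.inl rfl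
    · exact Or.inr (Or.inl rfl)
    · exact Or.inr (Or.inr ⟨rfl, Or.inr (by simp; omega)⟩)

lemma gml_nbr_set_last (hm : 4 ≤ m) (hn : 4 ≤ n) (c : ZMod (m-1)) (i : Fin n)
    (hi : i.val = n - 1) :
    (GML m n).neighborSet (c, i) =
      {(c - 1, if c = 0 then i.rev else i), (c + 1, if c = -1 then i.rev else i),
        (c, ⟨n - 2, by omega⟩)} := by
  ext w
  rw [gml_mem_nbr hm hn]
  simp only [Set.mem_insert_iff, Set.mem_singleton_iff]
  constructor
  · rintro (h | h | ⟨h1, h2 | h2⟩)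
    · exact Or.inl h
    · exact Or.inr (Or.inl h)
    · exact Or.inr (Or.inr (Prod.ext_iff.mpr ⟨h1, Fin.ext (by simp; omega)⟩))
    · have := w.2.isLt; omega
  · rintro (rfl | rfl | rfl)
    · exact Or.inl rfl
    · exact Or.inr (Or.inl rfl)
    · exact Or.inr (Or.inr ⟨rfl, Or.inl (by simp; omega)⟩)

lemma gml_nbr_set_mid (hm : 4 ≤ m) (hn : 4 ≤ n) (c : ZMod (m-1)) (i : Fin n)
    (hi0 : i.val ≠ 0) (hin : i.val ≠ n - 1) :
    (GML m n).neighborSet (c, i) =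
      {(c - 1, if c = 0 then i.rev else i), (c + 1, if c = -1 then i.rev else i),
        (c, ⟨i.val - 1, by omega⟩), (c, ⟨i.val + 1, have := i.isLt; by omega⟩)} := by
  ext w
  rw [gml_mem_nbr hm hn]
  simp only [Set.mem_insert_iff, Set.mem_singleton_iff]
  constructor
  · rintro (h | h | ⟨h1, h2 | h2⟩)
    · exact Or.inl h
    · exact Or.inr (Or.inl h)
    · exact Or.inr (Or.inr (Or.inl (Prod.ext_iff.mpr ⟨h1, Fin.ext (by simp; omega)⟩)))
    · exact Or.inr (Or.inr (Or.inr (Prod.ext_iff.mpr ⟨h1, Fin.ext (by simp; omega)⟩)))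
  · rintro (rfl | rfl | rfl | rfl)
    · exact Or.inl rfl
    · exact Or.inr (Or.inl rfl)
    · exact Or.inr (Or.inr ⟨rfl, Or.inl (by simp; omega)⟩)
    · exact Or.inr (Or.inr ⟨rfl, Or.inr (by simp)⟩)

lemma gml_ndeg_boundary (hm : 4 ≤ m) (hn : 4 ≤ n) (c : ZMod (m-1)) (i : Fin n)
    (hi : i.val = 0 ∨ i.val = n - 1) : ndeg (GML m n) (c, i) = 3 := by
  haveI : NeZero (m - 1) := ⟨by omega⟩
  have hLR : ∀ (a b : Fin n), ((c - 1, a) : ZMod (m-1) × Fin n) ≠ (c + 1, b) :=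
    fun a b h => sub_one_ne_add_one hm c (congrArg Prod.fst h)
  have hLC : ∀ (a b : Fin n), ((c - 1, a) : ZMod (m-1) × Fin n) ≠ (c, b) :=
    fun a b h => sub_one_ne_self hm c (congrArg Prod.fst h)
  have hRC : ∀ (a b : Fin n), ((c + 1, a) : ZMod (m-1) × Fin n) ≠ (c, b) :=
    fun a b h => add_one_ne_self hm c (congrArg Prod.fst h)
  rcases hi with hi | hi
  · rw [ndeg, gml_nbr_set_zero hm hn c i hi,
      Set.ncard_insert_of_notMem (by simp [hLR, hLC]),
      Set.ncard_insert_of_notMem (by simp [hRC]), Set.ncard_singleton]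
  · rw [ndeg, gml_nbr_set_last hm hn c i hi,
      Set.ncard_insert_of_notMem (by simp [hLR, hLC]),
      Set.ncard_insert_of_notMem (by simp [hRC]), Set.ncard_singleton]

lemma gml_ndeg_mid (hm : 4 ≤ m) (hn : 4 ≤ n) (c : ZMod (m-1)) (i : Fin n)
    (hi0 : i.val ≠ 0) (hin : i.val ≠ n - 1) : ndeg (GML m n) (c, i) = 4 := by
  haveI : NeZero (m - 1) := ⟨by omega⟩
  have hLR : ∀ (a b : Fin n), ((c - 1, a) : ZMod (m-1) × Fin n) ≠ (c + 1, b) :=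
    fun a b h => sub_one_ne_add_one hm c (congrArg Prod.fst h)
  have hLC : ∀ (a b : Fin n), ((c - 1, a) : ZMod (m-1) × Fin n) ≠ (c, b) :=
    fun a b h => sub_one_ne_self hm c (congrArg Prod.fst h)
  have hRC : ∀ (a b : Fin n), ((c + 1, a) : ZMod (m-1) × Fin n) ≠ (c, b) :=
    fun a b h => add_one_ne_self hm c (congrArg Prod.fst h)
  have hV : ((c, ⟨i.val - 1, by omega⟩) : ZMod (m-1) × Fin n) ≠
      (c, ⟨i.val + 1, have := i.isLt; by omega⟩) := by
    intro h
    have h2 : i.val - 1 = i.val + 1 := by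
      have := congrArg (fun p => (Prod.snd p).val) h
      simpa using this
    omega
  rw [ndeg, gml_nbr_set_mid hm hn c i hi0 hin,
    Set.ncard_insert_of_notMem (by simp [hLR, hLC]),
    Set.ncard_insert_of_notMem (by simp [hRC]),
    Set.ncard_insert_of_notMem (by simp [hV]), Set.ncard_singleton]

lemma gml_ndeg_cases (hm : 4 ≤ m) (hn : 4 ≤ n) (c : ZMod (m-1)) (i : Fin n) :
    (ndeg (GML m n) (c, i) = 3 ∧ (i.val = 0 ∨ i.val = n - 1)) ∨
      (ndeg (GML m n) (c, i) = 4 ∧ i.val ≠ 0 ∧ i.val ≠ n - 1) := by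
  by_cases hi : i.val = 0 ∨ i.val = n - 1
  · exact Or.inl ⟨gml_ndeg_boundary hm hn c i hi, hi⟩
  · push_neg at hi
    exact Or.inr ⟨gml_ndeg_mid hm hn c i hi.1 hi.2, hi⟩

lemma sym2_rep {α : Type*} (z : Sym2 α) : ∃ x y, z = s(x, y) := by
  induction z using Sym2.ind with
  | _ x y => exact ⟨x, y, rfl⟩

lemma ndeg5_half (hm : 4 ≤ m) (hn : 4 ≤ n) {u v : ZMod (m-1) × Fin n}
    (h : (GML m n).Adj u v) (hu : u.2.val = 0 ∨ u.2.val = n - 1)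
    (hv0 : v.2.val ≠ 0) (hvn : v.2.val ≠ n - 1) :
    ∃ c : ZMod (m-1),
      s(u, v) = s(((c, ⟨0, by omega⟩) : ZMod (m-1) × Fin n), (c, ⟨1, by omega⟩)) ∨
      s(u, v) = s(((c, ⟨n - 2, by omega⟩) : ZMod (m-1) × Fin n), (c, ⟨n - 1, by omega⟩)) := by
  obtain ⟨c, i⟩ := u
  obtain ⟨c', i'⟩ := v
  simp only at hu hv0 hvn
  have hvmem : (c', i') ∈ (GML m n).neighborSet (c, i) := h
  rw [gml_mem_nbr hm hn] at hvmem
  have hrev : (i.rev : ℕ) = n - 1 - i.val := by rw [Fin.val_rev]; omega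
  have hi' : i'.val < n := i'.isLt
  rcases hvmem with h2 | h2 | ⟨h1, h2⟩
  · exfalso
    have := congrArg (fun p => (Prod.snd p).val) h2
    simp only at this
    split_ifs at this <;> omega
  · exfalso
    have := congrArg (fun p => (Prod.snd p).val) h2
    simp only at this
    split_ifs at this <;> omega
  · simp only at h1 h2
    subst h1
    rcases hu with hu | hu
    · rcases h2 with h2 | h2
      · omega
      · refine ⟨c', Or.inl (Sym2.eq_iff.mpr (Or.inl ⟨?_, ?_⟩))⟩
        · exact Prod.ext rfl (Fin.ext (by simpa using hu))
        · exact Prod.ext rfl (Fin.ext (by simp; omega))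
    · rcases h2 with h2 | h2
      · refine ⟨c', Or.inr (Sym2.eq_iff.mpr (Or.inr ⟨?_, ?_⟩))⟩
        · exact Prod.ext rfl (Fin.ext (by simp; omega))
        · exact Prod.ext rfl (Fin.ext (by simp; omega))
      · omega

lemma ndeg5_classify (hm : 4 ≤ m) (hn : 4 ≤ n) (e : (GML m n).edgeSet)
    (h5 : ndeg (GML m n).lineGraph e = 5) :
    ∃ c : ZMod (m-1),
      (e : Sym2 (ZMod (m-1) × Fin n)) =
        s(((c, ⟨0, by omega⟩) : ZMod (m-1) × Fin n), (c, ⟨1, by omega⟩)) ∨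
      (e : Sym2 (ZMod (m-1) × Fin n)) =
        s(((c, ⟨n - 2, by omega⟩) : ZMod (m-1) × Fin n), (c, ⟨n - 1, by omega⟩)) := by
  obtain ⟨u, v, huv⟩ := sym2_rep (e : Sym2 (ZMod (m-1) × Fin n))
  have hadj : (GML m n).Adj u v := by
    rw [← SimpleGraph.mem_edgeSet, ← huv]; exact e.2
  have he : e = ⟨s(u, v), hadj⟩ := Subtype.ext huv
  rw [he] at h5
  have hsum := ndeg_lineGraph_add_two hadj (gml_nbr_finite hm _) (gml_nbr_finite hm _)
  rw [h5] at hsum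
  rw [huv]
  obtain ⟨cu, iu⟩ := u
  obtain ⟨cv, iv⟩ := v
  rcases gml_ndeg_cases hm hn cu iu with ⟨d1, hb1⟩ | ⟨d1, hm1⟩ <;>
    rcases gml_ndeg_cases hm hn cv iv with ⟨d2, hb2⟩ | ⟨d2, hm2⟩
  · omega
  · exact ndeg5_half hm hn hadj hb1 hm2.1 hm2.2
  · obtain ⟨c, hc⟩ := ndeg5_half hm hn hadj.symm hb2 hm1.1 hm1.2
    refine ⟨c, ?_⟩
    rw [Sym2.eq_swap (a := ((cu, iu) : ZMod (m-1) × Fin n))]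
    exact hc
  · omega

lemma ndeg6_rows (hm : 4 ≤ m) (hn : 4 ≤ n) (f : (GML m n).edgeSet)
    (h6 : ndeg (GML m n).lineGraph f = 6) :
    ∀ w ∈ (f : Sym2 (ZMod (m-1) × Fin n)), w.2.val ≠ 0 ∧ w.2.val ≠ n - 1 := by
  obtain ⟨u, v, huv⟩ := sym2_rep (f : Sym2 (ZMod (m-1) × Fin n))
  have hadj : (GML m n).Adj u v := by
    rw [← SimpleGraph.mem_edgeSet, ← huv]; exact f.2
  have he : f = ⟨s(u, v), hadj⟩ := Subtype.ext huv
  rw [he] at h6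
  have hsum := ndeg_lineGraph_add_two hadj (gml_nbr_finite hm _) (gml_nbr_finite hm _)
  rw [h6] at hsum
  obtain ⟨cu, iu⟩ := u
  obtain ⟨cv, iv⟩ := v
  intro w hw
  rw [huv, Sym2.mem_iff] at hw
  rcases gml_ndeg_cases hm hn cu iu with ⟨d1, hb1⟩ | ⟨d1, hm1⟩ <;>
    rcases gml_ndeg_cases hm hn cv iv with ⟨d2, hb2⟩ | ⟨d2, hm2⟩ <;>
      [skip; omega; omega; skip] <;>
    rcases hw with rfl | rfl
  · omega
  · omega
  · exact hm1
  · exact hm2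

lemma edge_through {V : Type*} {G : SimpleGraph V} (f : G.edgeSet) (w : V)
    (hw : w ∈ (f : Sym2 V)) :
    ∃ x ∈ G.neighborSet w, (f : Sym2 V) = s(w, x) := by
  refine ⟨Sym2.Mem.other hw, ?_, (Sym2.other_spec hw).symm⟩
  rw [SimpleGraph.mem_neighborSet, ← SimpleGraph.mem_edgeSet, Sym2.other_spec hw]
  exact f.2

lemma build_mem (hm : 4 ≤ m) (hn : 4 ≤ n) {u v x : ZMod (m-1) × Fin n}
    (h1 : (GML m n).Adj u v) (h2 : (GML m n).Adj v x)
    (hu : u.2.val = 0 ∨ u.2.val = n - 1)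
    (hv1 : v.2.val ≠ 0) (hv2 : v.2.val ≠ n - 1)
    (hx1 : x.2.val ≠ 0) (hx2 : x.2.val ≠ n - 1) :
    s(s(u, v), s(v, x)) ∈
      Sym2.map (Subtype.val : (GML m n).edgeSet → Sym2 (ZMod (m-1) × Fin n)) ''
        {E | E ∈ ((GML m n).lineGraph).edgeSet ∧ ∃ e f, E = s(e, f) ∧
          ndeg (GML m n).lineGraph e = 5 ∧ ndeg (GML m n).lineGraph f = 6} := by
  have hne : (⟨s(u, v), h1⟩ : (GML m n).edgeSet) ≠ ⟨s(v, x), h2⟩ := by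
    intro hef
    have hval := Subtype.ext_iff.mp hef
    rcases Sym2.eq_iff.mp hval with ⟨a, b⟩ | ⟨a, b⟩
    · exact h1.ne a
    · have ha := congrArg (fun z : ZMod (m-1) × Fin n => z.2.val) a
      rcases hu with h | h <;> omega
  have hadj : (GML m n).lineGraph.Adj ⟨s(u, v), h1⟩ ⟨s(v, x), h2⟩ :=
    SimpleGraph.lineGraph_adj_iff_exists.mpr
      ⟨hne, v, Sym2.mem_mk_right u v, Sym2.mem_mk_left v x⟩
  refine ⟨s(⟨s(u, v), h1⟩, ⟨s(v, x), h2⟩),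
    ⟨(SimpleGraph.mem_edgeSet _).mpr hadj, ⟨s(u, v), h1⟩, ⟨s(v, x), h2⟩, rfl, ?_, ?_⟩,
    Sym2.map_pair_eq _ _ _⟩
  · have hadd := ndeg_lineGraph_add_two h1 (gml_nbr_finite hm _) (gml_nbr_finite hm _)
    have e1 : ndeg (GML m n) u = 3 := gml_ndeg_boundary hm hn u.1 u.2 hu
    have e2 : ndeg (GML m n) v = 4 := gml_ndeg_mid hm hn v.1 v.2 hv1 hv2
    rw [e1, e2] at hadd
    omega
  · have hadd := ndeg_lineGraph_add_two h2 (gml_nbr_finite hm _) (gml_nbr_finite hm _)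
    have e1 : ndeg (GML m n) v = 4 := gml_ndeg_mid hm hn v.1 v.2 hv1 hv2
    have e2 : ndeg (GML m n) x = 4 := gml_ndeg_mid hm hn x.1 x.2 hx1 hx2
    rw [e1, e2] at hadd
    omega

end helpers

set_option maxHeartbeats 3000000 in
/-- In `L(M_{m,n})` (`m, n ≥ 4`), the number of edges with one endpoint of degree 5 and the other of degree 6 equals `6(m−1)`. -/
theorem gml_line_edges_56 (m n : ℕ) (hm : 4 ≤ m) (hn : 4 ≤ n) :
    ({E | E ∈ ((GML m n).lineGraph).edgeSet ∧ ∃ e f, E = s(e, f) ∧ ndeg (GML m n).lineGraph e = 5 ∧ ndeg (GML m n).lineGraph f = 6}.ncard : ℤ) = 6 * ((m : ℤ) - 1) := by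
  haveI : NeZero (m - 1) := ⟨by omega⟩
  set S := {E | E ∈ ((GML m n).lineGraph).edgeSet ∧ ∃ e f, E = s(e, f) ∧
      ndeg (GML m n).lineGraph e = 5 ∧ ndeg (GML m n).lineGraph f = 6} with hS
  set Ψ : ZMod (m-1) × Fin 6 → Sym2 (Sym2 (ZMod (m-1) × Fin n)) := fun p =>
    ![s(s((p.1, ⟨0, by omega⟩), (p.1, ⟨1, by omega⟩)),
        s(((p.1, ⟨1, by omega⟩) : ZMod (m-1) × Fin n), (p.1, ⟨1 + 1, by omega⟩))),
      s(s((p.1, ⟨0, by omega⟩), (p.1, ⟨1, by omega⟩)),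
        s(((p.1, ⟨1, by omega⟩) : ZMod (m-1) × Fin n),
          (p.1 - 1, if p.1 = 0 then (⟨1, by omega⟩ : Fin n).rev else ⟨1, by omega⟩))),
      s(s((p.1, ⟨0, by omega⟩), (p.1, ⟨1, by omega⟩)),
        s(((p.1, ⟨1, by omega⟩) : ZMod (m-1) × Fin n),
          (p.1 + 1, if p.1 = -1 then (⟨1, by omega⟩ : Fin n).rev else ⟨1, by omega⟩))),
      s(s((p.1, ⟨n - 2, by omega⟩), (p.1, ⟨n - 1, by omega⟩)),
        s(((p.1, ⟨n - 2, by omega⟩) : ZMod (m-1) × Fin n), (p.1, ⟨n - 2 - 1, by omega⟩))),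
      s(s((p.1, ⟨n - 2, by omega⟩), (p.1, ⟨n - 1, by omega⟩)),
        s(((p.1, ⟨n - 2, by omega⟩) : ZMod (m-1) × Fin n),
          (p.1 - 1, if p.1 = 0 then (⟨n - 2, by omega⟩ : Fin n).rev else ⟨n - 2, by omega⟩))),
      s(s((p.1, ⟨n - 2, by omega⟩), (p.1, ⟨n - 1, by omega⟩)),
        s(((p.1, ⟨n - 2, by omega⟩) : ZMod (m-1) × Fin n),
          (p.1 + 1, if p.1 = -1 then (⟨n - 2, by omega⟩ : Fin n).rev else ⟨n - 2, by omega⟩)))]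
      p.2 with hΨ
  have fwd : Sym2.map (Subtype.val : (GML m n).edgeSet → _) '' S ⊆ Ψ '' Set.univ := by
    intro z hz
    obtain ⟨E, hE, rfl⟩ := hz
    simp only [hS, Set.mem_setOf_eq] at hE
    obtain ⟨hEedge, e, f, rfl, h5, h6⟩ := hE
    have hadj : (GML m n).lineGraph.Adj e f := (SimpleGraph.mem_edgeSet _).mp hEedge
    obtain ⟨hne, w, hwe, hwf⟩ := SimpleGraph.lineGraph_adj_iff_exists.mp hadj
    obtain ⟨c, hc | hc⟩ := ndeg5_classify hm hn e h5
    · -- top boundary edge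
      have hw : w = (c, ⟨1, by omega⟩) := by
        rw [hc, Sym2.mem_iff] at hwe
        rcases hwe with rfl | rfl
        · exact absurd rfl (ndeg6_rows hm hn f h6 _ hwf).1
        · rfl
      subst hw
      obtain ⟨x, hxN, hfx⟩ := edge_through f _ hwf
      rw [gml_nbr_set_mid hm hn c ⟨1, by omega⟩ (by simp) (by simp; omega)] at hxN
      simp only [Set.mem_insert_iff, Set.mem_singleton_iff] at hxN
      rcases hxN with rfl | rfl | rfl | rfl
      · refine ⟨(c, ⟨1, by omega⟩), Set.mem_univ _, ?_⟩
        rw [Sym2.map_pair_eq, hc, hfx]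
        rfl
      · refine ⟨(c, ⟨2, by omega⟩), Set.mem_univ _, ?_⟩
        rw [Sym2.map_pair_eq, hc, hfx]
        rfl
      · exfalso
        apply hne
        apply Subtype.ext
        rw [hc, hfx]
        exact Sym2.eq_iff.mpr (Or.inr ⟨Prod.ext rfl (Fin.ext (by simp)),
          Prod.ext rfl (Fin.ext (by simp))⟩)
      · refine ⟨(c, ⟨0, by omega⟩), Set.mem_univ _, ?_⟩
        rw [Sym2.map_pair_eq, hc, hfx]
        rfl
    · -- bottom boundary edge
      have hw : w = (c, ⟨n - 2, by omega⟩) := by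
        rw [hc, Sym2.mem_iff] at hwe
        rcases hwe with rfl | rfl
        · rfl
        · exact absurd rfl (ndeg6_rows hm hn f h6 _ hwf).2
      subst hw
      obtain ⟨x, hxN, hfx⟩ := edge_through f _ hwf
      rw [gml_nbr_set_mid hm hn c ⟨n - 2, by omega⟩ (by simp; omega) (by simp; omega)] at hxN
      simp only [Set.mem_insert_iff, Set.mem_singleton_iff] at hxN
      rcases hxN with rfl | rfl | rfl | rfl
      · refine ⟨(c, ⟨4, by omega⟩), Set.mem_univ _, ?_⟩
        rw [Sym2.map_pair_eq, hc, hfx]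
        rfl
      · refine ⟨(c, ⟨5, by omega⟩), Set.mem_univ _, ?_⟩
        rw [Sym2.map_pair_eq, hc, hfx]
        rfl
      · refine ⟨(c, ⟨3, by omega⟩), Set.mem_univ _, ?_⟩
        rw [Sym2.map_pair_eq, hc, hfx]
        rfl
      · exfalso
        apply hne
        apply Subtype.ext
        rw [hc, hfx]
        exact Sym2.eq_iff.mpr (Or.inl ⟨Prod.ext rfl (Fin.ext (by simp)),
          Prod.ext rfl (Fin.ext (by simp; omega))⟩)
  have bwd : Ψ '' Set.univ ⊆ Sym2.map (Subtype.val : (GML m n).edgeSet → _) '' S := by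
    have hadjU : ∀ (c : ZMod (m-1)) (i j : Fin n), i.val + 1 = j.val →
        (GML m n).Adj (c, i) (c, j) := by
      intro c i j hij
      have : (c, j) ∈ (GML m n).neighborSet (c, i) := by
        rw [gml_mem_nbr hm hn]; exact Or.inr (Or.inr ⟨rfl, Or.inr hij⟩)
      exact this
    have hadjD : ∀ (c : ZMod (m-1)) (i j : Fin n), j.val + 1 = i.val →
        (GML m n).Adj (c, i) (c, j) := by
      intro c i j hij
      have : (c, j) ∈ (GML m n).neighborSet (c, i) := by
        rw [gml_mem_nbr hm hn]; exact Or.inr (Or.inr ⟨rfl, Or.inl hij⟩)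
      exact this
    have hadjL : ∀ (c : ZMod (m-1)) (i : Fin n),
        (GML m n).Adj (c, i) (c - 1, if c = 0 then i.rev else i) := by
      intro c i
      have : (c - 1, if c = 0 then i.rev else i) ∈ (GML m n).neighborSet (c, i) := by
        rw [gml_mem_nbr hm hn]; exact Or.inl rfl
      exact this
    have hadjR : ∀ (c : ZMod (m-1)) (i : Fin n),
        (GML m n).Adj (c, i) (c + 1, if c = -1 then i.rev else i) := by
      intro c i
      have : (c + 1, if c = -1 then i.rev else i) ∈ (GML m n).neighborSet (c, i) := by
        rw [gml_mem_nbr hm hn]; exact Or.inr (Or.inl rfl)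
      exact this
    rintro z ⟨⟨c, t⟩, -, rfl⟩
    fin_cases t
    · exact build_mem hm hn (hadjU c _ _ (by simp)) (hadjU c _ _ (by simp)) (Or.inl rfl)
        (by simp) (by simp; omega) (by simp) (by simp; omega)
    · exact build_mem hm hn (hadjU c _ _ (by simp)) (hadjL c _) (Or.inl rfl)
        (by simp) (by simp; omega)
        (by simp; split_ifs <;> simp [Fin.val_rev] <;> omega)
        (by simp; split_ifs <;> simp [Fin.val_rev] <;> omega)
    · exact build_mem hm hn (hadjU c _ _ (by simp)) (hadjR c _) (Or.inl rfl)
        (by simp) (by simp; omega)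
        (by simp; split_ifs <;> simp [Fin.val_rev] <;> omega)
        (by simp; split_ifs <;> simp [Fin.val_rev] <;> omega)
    · have hsw : s(((c, ⟨n - 1, by omega⟩) : ZMod (m-1) × Fin n), (c, ⟨n - 2, by omega⟩)) =
          s(((c, ⟨n - 2, by omega⟩) : ZMod (m-1) × Fin n), (c, ⟨n - 1, by omega⟩)) :=
        Sym2.eq_swap
      have hb := build_mem hm hn (u := (c, ⟨n - 1, by omega⟩)) (v := (c, ⟨n - 2, by omega⟩))
        (x := (c, ⟨n - 2 - 1, by omega⟩))
        (hadjD c _ _ (by simp; omega)) (hadjD c _ _ (by simp; omega))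
        (Or.inr rfl) (by simp; omega) (by simp; omega) (by simp; omega) (by simp; omega)
      rw [hsw] at hb
      exact hb
    · have hsw : s(((c, ⟨n - 1, by omega⟩) : ZMod (m-1) × Fin n), (c, ⟨n - 2, by omega⟩)) =
          s(((c, ⟨n - 2, by omega⟩) : ZMod (m-1) × Fin n), (c, ⟨n - 1, by omega⟩)) :=
        Sym2.eq_swap
      have hb := build_mem hm hn (u := (c, ⟨n - 1, by omega⟩)) (v := (c, ⟨n - 2, by omega⟩))
        (x := (c - 1, if c = 0 then (⟨n - 2, by omega⟩ : Fin n).rev else ⟨n - 2, by omega⟩))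
        (hadjD c _ _ (by simp; omega)) (hadjL c _)
        (Or.inr rfl) (by simp; omega) (by simp; omega)
        (by simp; split_ifs <;> simp [Fin.val_rev] <;> omega)
        (by simp; split_ifs <;> simp [Fin.val_rev] <;> omega)
      rw [hsw] at hb
      exact hb
    · have hsw : s(((c, ⟨n - 1, by omega⟩) : ZMod (m-1) × Fin n), (c, ⟨n - 2, by omega⟩)) =
          s(((c, ⟨n - 2, by omega⟩) : ZMod (m-1) × Fin n), (c, ⟨n - 1, by omega⟩)) :=
        Sym2.eq_swap
      have hb := build_mem hm hn (u := (c, ⟨n - 1, by omega⟩)) (v := (c, ⟨n - 2, by omega⟩))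
        (x := (c + 1, if c = -1 then (⟨n - 2, by omega⟩ : Fin n).rev else ⟨n - 2, by omega⟩))
        (hadjD c _ _ (by simp; omega)) (hadjR c _)
        (Or.inr rfl) (by simp; omega) (by simp; omega)
        (by simp; split_ifs <;> simp [Fin.val_rev] <;> omega)
        (by simp; split_ifs <;> simp [Fin.val_rev] <;> omega)
      rw [hsw] at hb
      exact hb
  have hΨinj : Set.InjOn Ψ Set.univ := by
    have zf1 : ∀ x : ZMod (m-1), ¬(x = x - 1) := fun x h => sub_one_ne_self hm x h.symm
    have zf2 : ∀ x : ZMod (m-1), ¬(x - 1 = x) := sub_one_ne_self hm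
    have zf3 : ∀ x : ZMod (m-1), ¬(x = x + 1) := fun x h => add_one_ne_self hm x h.symm
    have zf4 : ∀ x : ZMod (m-1), ¬(x + 1 = x) := add_one_ne_self hm
    have zf5 : ∀ x : ZMod (m-1), ¬(x - 1 = x + 1) := sub_one_ne_add_one hm
    have zf6 : ∀ x : ZMod (m-1), ¬(x + 1 = x - 1) := fun x h => sub_one_ne_add_one hm x h.symm
    rintro ⟨c, t⟩ - ⟨c', t'⟩ - h
    simp only [hΨ] at h
    fin_cases t <;> fin_cases t' <;>
      [skip; skip; skip; skip; skip; skip; skip; skip; skip; skip; skip; skip;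
       skip; skip; skip; skip; skip; skip; skip; skip; skip; skip; skip; skip;
       skip; skip; skip; skip; skip; skip; skip; skip; skip; skip; skip; skip] <;>
    · rcases Sym2.eq_iff.mp h with ⟨hE, hF⟩ | ⟨hE, hF⟩ <;>
      rcases Sym2.eq_iff.mp hE with ⟨h1, h2⟩ | ⟨h1, h2⟩ <;>
      rcases Sym2.eq_iff.mp hF with ⟨h3, h4⟩ | ⟨h3, h4⟩ <;>
      · have c1 := congrArg Prod.fst h1
        have c3 := congrArg Prod.fst h3
        have c4 := congrArg Prod.fst h4
        have r1 := congrArg (fun z : ZMod (m-1) × Fin n => z.2.val) h1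
        have r2 := congrArg (fun z : ZMod (m-1) × Fin n => z.2.val) h2
        have r3 := congrArg (fun z : ZMod (m-1) × Fin n => z.2.val) h3
        have r4 := congrArg (fun z : ZMod (m-1) × Fin n => z.2.val) h4
        (try dsimp only at c1 c3 c4 r1 r2 r3 r4)
        (try split_ifs at r1 r2 r3 r4) <;>
        ((try simp only [Fin.val_rev] at r1 r2 r3 r4) <;>
         (try dsimp only at r1 r2 r3 r4) <;>
        first
          | (exfalso; omega)
          | (rw [← c1] at c3 c4
             first
               | (exfalso; simp only [zf1, zf2, zf3, zf4, zf5, zf6] at c3 c4; done)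
               | exact Prod.ext c1 rfl))
  have h1 : S.ncard = (Sym2.map (Subtype.val : (GML m n).edgeSet → _) '' S).ncard :=
    (Set.ncard_image_of_injective S (Sym2.map.injective Subtype.val_injective)).symm
  rw [Set.Subset.antisymm fwd bwd] at h1
  rw [Set.ncard_image_of_injOn hΨinj, Set.ncard_univ, Nat.card_prod, Nat.card_zmod,
    Nat.card_eq_fintype_card, Fintype.card_fin] at h1
  rw [h1]
  push_cast [Nat.cast_sub (by omega : 1 ≤ m)]
  ring
end

section
/- For m, n ≥ 4, in the line graph L(M_{m,n}) of the generalized Möbius ladder, the number of edges both of whose endpoints have degree 6 equals (m−1)[(n−2) + (n−4) + 4(n−3)] = 6(m−1)(n−3). -/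
open SimpleGraph


lemma sym2_pair_eq {α : Type*} {v x y v' x' y' : α}
    (h : s(s(v,x),s(v,y)) = s(s(v',x'),s(v',y')))
    (hxy : x ≠ y) (hxy' : x' ≠ y') (_hvx : v ≠ x) (hvy : v ≠ y)
    (hvx' : v' ≠ x') (hvy' : v' ≠ y') :
    v = v' ∧ ((x = x' ∧ y = y') ∨ (x = y' ∧ y = x')) := by
  rw [Sym2.eq_iff] at h
  rcases h with ⟨h1, h2⟩ | ⟨h1, h2⟩ <;>
    rw [Sym2.eq_iff] at h1 h2 <;> aesop

lemma ndeg_lineGraph_eq {V : Type*} [Finite V] {G : SimpleGraph V} {a b : V} (hab : G.Adj a b) :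
    ndeg G.lineGraph ⟨s(a,b), hab⟩ = (ndeg G a - 1) + (ndeg G b - 1) := by
  classical
  have hne : a ≠ b := hab.ne
  have key : Subtype.val '' (G.lineGraph.neighborSet ⟨s(a,b), hab⟩)
      = ((fun c => s(a,c)) '' (G.neighborSet a \ {b})) ∪ ((fun c => s(b,c)) '' (G.neighborSet b \ {a})) := by
    ext f
    simp only [Set.mem_image, Set.mem_union, Set.mem_diff, Set.mem_singleton_iff,
      mem_neighborSet]
    constructor
    · rintro ⟨⟨f, hf⟩, hadj, rfl⟩
      rw [lineGraph_adj_iff_exists] at hadj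
      obtain ⟨hne', v, hv1, hv2⟩ := hadj
      simp only [Sym2.mem_iff] at hv1
      have hfe : f ≠ s(a, b) := fun h => hne' (Subtype.ext h.symm)
      rcases hv1 with rfl | rfl
      · obtain ⟨c, rfl⟩ := Sym2.mem_iff_exists.1 hv2
        refine Or.inl ⟨c, ⟨(G.mem_edgeSet).1 hf, ?_⟩, rfl⟩
        rintro rfl; exact hfe rfl
      · obtain ⟨c, rfl⟩ := Sym2.mem_iff_exists.1 hv2
        refine Or.inr ⟨c, ⟨(G.mem_edgeSet).1 hf, ?_⟩, rfl⟩
        rintro rfl; exact hfe (Sym2.eq_swap)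
    · rintro (⟨c, ⟨hc, hcb⟩, rfl⟩ | ⟨c, ⟨hc, hca⟩, rfl⟩)
      · refine ⟨⟨s(a,c), (G.mem_edgeSet).2 hc⟩, ?_, rfl⟩
        rw [lineGraph_adj_iff_exists]
        refine ⟨?_, a, by simp, by simp⟩
        intro h
        have h2 := congrArg Subtype.val h
        simp only [Sym2.eq_iff] at h2
        rcases h2 with ⟨-, h2⟩ | ⟨h2, -⟩
        · exact hcb h2.symm
        · exact hc.ne h2
      · refine ⟨⟨s(b,c), (G.mem_edgeSet).2 hc⟩, ?_, rfl⟩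
        rw [lineGraph_adj_iff_exists]
        refine ⟨?_, b, by simp, by simp⟩
        intro h
        have h2 := congrArg Subtype.val h
        simp only [Sym2.eq_iff] at h2
        tauto
  have hdisj : Disjoint ((fun c => s(a,c)) '' (G.neighborSet a \ {b}))
      ((fun c => s(b,c)) '' (G.neighborSet b \ {a})) := by
    rw [Set.disjoint_left]
    rintro f ⟨c, ⟨hc, hcb⟩, rfl⟩ ⟨d, ⟨hd, hda⟩, hfd⟩
    simp only [Set.mem_singleton_iff] at hcb hda
    rw [Sym2.eq_iff] at hfd
    rcases hfd with ⟨h1, -⟩ | ⟨-, h2⟩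
    · exact hne (h1.symm)
    · exact hda h2
  have hia : Set.InjOn (fun c => s(a,c)) (G.neighborSet a \ {b}) := by
    intro c hc d hd h
    have hac : G.Adj a c := hc.1
    simp only [Sym2.eq_iff] at h
    rcases h with ⟨-, h⟩ | ⟨h1, h2⟩
    · exact h
    · exact absurd h2 hac.ne'
  have hib : Set.InjOn (fun c => s(b,c)) (G.neighborSet b \ {a}) := by
    intro c hc d hd h
    have hac : G.Adj b c := hc.1
    simp only [Sym2.eq_iff] at h
    rcases h with ⟨-, h⟩ | ⟨h1, h2⟩
    · exact h
    · exact absurd h2 hac.ne'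
  have hcard := congrArg Set.ncard key
  rw [Set.ncard_image_of_injective _ Subtype.val_injective] at hcard
  rw [ndeg, hcard, Set.ncard_union_eq hdisj (Set.toFinite _) (Set.toFinite _),
    Set.ncard_image_of_injOn hia, Set.ncard_image_of_injOn hib,
    Set.ncard_diff_singleton_of_mem (by exact hab),
    Set.ncard_diff_singleton_of_mem (by exact hab.symm)]
  rfl


lemma mem_ite_singleton {α : Type*} {c : Prop} [Decidable c] {x y : α} :
    (x ∈ if c then ({y} : Finset α) else ∅) ↔ c ∧ x = y := by
  split_ifs with h <;> simp [h]

section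

variable (m n : ℕ)

def fwd (v : ZMod (m-1) × Fin n) : ZMod (m-1) × Fin n :=
  if v.1 = ((m - 2 : ℕ) : ZMod (m - 1)) then (0, v.2.rev) else (v.1 + 1, v.2)

def bwd (v : ZMod (m-1) × Fin n) : ZMod (m-1) × Fin n :=
  if v.1 = 0 then (((m - 2 : ℕ) : ZMod (m - 1)), v.2.rev) else (v.1 - 1, v.2)

def upv (v : ZMod (m-1) × Fin n) : ZMod (m-1) × Fin n :=
  (v.1, ⟨v.2.val - 1, lt_of_le_of_lt (Nat.sub_le _ _) v.2.isLt⟩)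

def dnv (v : ZMod (m-1) × Fin n) : ZMod (m-1) × Fin n :=
  (v.1, ⟨min (v.2.val + 1) (n-1), by have := v.2.isLt; omega⟩)

def nbhd (v : ZMod (m-1) × Fin n) : Finset (ZMod (m-1) × Fin n) :=
  ({fwd m n v, bwd m n v} : Finset _)
  ∪ (if v.2.val + 1 ≤ n - 1 then {dnv m n v} else ∅)
  ∪ (if 1 ≤ v.2.val then {upv m n v} else ∅)

variable (hm : 4 ≤ m)
include hm

lemma one_ne' : (1 : ZMod (m-1)) ≠ 0 := by
  haveI : NeZero (m-1) := ⟨by omega⟩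
  intro h
  rw [show (1 : ZMod (m-1)) = ((1:ℕ) : ZMod (m-1)) by push_cast; ring,
    ZMod.natCast_eq_zero_iff] at h
  have := Nat.le_of_dvd one_pos h; omega

lemma two_ne' : (2 : ZMod (m-1)) ≠ 0 := by
  haveI : NeZero (m-1) := ⟨by omega⟩
  intro h
  rw [show (2 : ZMod (m-1)) = ((2:ℕ) : ZMod (m-1)) by push_cast; ring,
    ZMod.natCast_eq_zero_iff] at h
  have := Nat.le_of_dvd two_pos h; omega

lemma gmu_ne_zero : ((m - 2 : ℕ) : ZMod (m - 1)) ≠ 0 := by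
  haveI : NeZero (m-1) := ⟨by omega⟩
  intro h
  rw [ZMod.natCast_eq_zero_iff] at h
  have := Nat.le_of_dvd (by omega) h; omega

lemma gmu_add_one : ((m - 2 : ℕ) : ZMod (m - 1)) + 1 = 0 := by
  haveI : NeZero (m-1) := ⟨by omega⟩
  rw [show ((m - 2 : ℕ) : ZMod (m - 1)) + 1 = ((m - 2 + 1 : ℕ) : ZMod (m - 1)) by push_cast; ring,
    show m - 2 + 1 = m - 1 by omega, ZMod.natCast_self]

lemma gml_adj_iff {v w : ZMod (m-1) × Fin n} :
    (GML m n).Adj v w ↔ gmlRel m n v w ∨ gmlRel m n w v := by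
  rw [GML, fromRel_adj]
  constructor
  · exact fun h => h.2
  · intro h
    refine ⟨?_, h⟩
    have key : ∀ a b : ZMod (m-1) × Fin n, gmlRel m n a b → a ≠ b := by
      rintro a b (⟨h1, h2⟩ | ⟨h1, h2, h3⟩ | ⟨h1, h2, h3⟩) rfl
      · omega
      · exact one_ne' m hm (by linear_combination -h2)
      · exact gmu_ne_zero m hm (h1.symm.trans h2)
    rcases h with h | h
    · exact key v w h
    · exact (key w v h).symm

lemma adj_iff_mem_nbhd (v w : ZMod (m-1) × Fin n) :
    (GML m n).Adj v w ↔ w ∈ nbhd m n v := by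
  have hmu := gmu_add_one m hm
  rw [gml_adj_iff m n hm]
  unfold nbhd
  simp only [Finset.mem_union, Finset.mem_insert, Finset.mem_singleton, mem_ite_singleton]
  constructor
  · rintro ((⟨h1, h2⟩ | ⟨h1, h2, h3⟩ | ⟨h1, h2, h3⟩) | (⟨h1, h2⟩ | ⟨h1, h2, h3⟩ | ⟨h1, h2, h3⟩))
    · -- vertical v→w : w = dnv
      have hw := w.2.isLt
      refine Or.inl (Or.inr ⟨by omega, ?_⟩)
      rw [dnv]
      refine Prod.ext h1.symm (Fin.ext ?_)
      simp only []
      omega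
    · -- ordinary horizontal v→w : w = fwd
      refine Or.inl (Or.inl (Or.inl ?_))
      rw [fwd, if_neg h1]
      exact Prod.ext h2 h3.symm
    · -- twisted v→w : w = fwd
      have hv := v.2.isLt
      refine Or.inl (Or.inl (Or.inl ?_))
      rw [fwd, if_pos h1]
      refine Prod.ext h2 (Fin.ext ?_)
      simp only [Fin.val_rev]
      omega
    · -- vertical w→v : w = upv
      refine Or.inr ⟨by omega, ?_⟩
      rw [upv]
      refine Prod.ext h1 (Fin.ext ?_)
      simp only []
      omega
    · -- ordinary horizontal w→v : w = bwd
      have hv0 : v.1 ≠ 0 := by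
        intro h0; apply h1; rw [h0] at h2; linear_combination -h2 - hmu
      refine Or.inl (Or.inl (Or.inr ?_))
      rw [bwd, if_neg hv0]
      exact Prod.ext (by rw [h2]; ring) h3
    · -- twisted w→v : w = bwd
      have hv := v.2.isLt
      refine Or.inl (Or.inl (Or.inr ?_))
      rw [bwd, if_pos h2]
      refine Prod.ext h1 (Fin.ext ?_)
      simp only [Fin.val_rev]
      omega
  · rintro (((rfl | rfl) | ⟨hc, rfl⟩) | ⟨hc, rfl⟩)
    · -- fwd
      by_cases hv : v.1 = ((m - 2 : ℕ) : ZMod (m - 1))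
      · refine Or.inl (Or.inr (Or.inr ⟨hv, ?_, ?_⟩))
        · rw [fwd, if_pos hv]
        · rw [fwd, if_pos hv]
          have hv2 := v.2.isLt
          simp only [Fin.val_rev]
          omega
      · refine Or.inl (Or.inr (Or.inl ⟨hv, ?_, ?_⟩))
        · rw [fwd, if_neg hv]
        · rw [fwd, if_neg hv]
    · -- bwd
      by_cases hv : v.1 = 0
      · refine Or.inr (Or.inr (Or.inr ⟨?_, hv, ?_⟩))
        · rw [bwd, if_pos hv]
        · rw [bwd, if_pos hv]
          have hv2 := v.2.isLt
          simp only [Fin.val_rev]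
          omega
      · refine Or.inr (Or.inr (Or.inl ⟨?_, ?_, ?_⟩))
        · rw [bwd, if_neg hv]
          intro h; apply hv; linear_combination h + hmu
        · rw [bwd, if_neg hv]; ring
        · rw [bwd, if_neg hv]
    · -- dnv
      refine Or.inl (Or.inl ⟨rfl, ?_⟩)
      rw [dnv]
      simp only []
      omega
    · -- upv
      refine Or.inr (Or.inl ⟨rfl, ?_⟩)
      rw [upv]
      simp only []
      omega

end
section
variable (m n : ℕ) (hm : 4 ≤ m)
include hm

lemma fwd_fst_ne (v : ZMod (m-1) × Fin n) : (fwd m n v).1 ≠ v.1 := by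
  rw [fwd]; split_ifs with h
  · rw [h]; exact (gmu_ne_zero m hm).symm
  · intro h2; exact one_ne' m hm (by linear_combination h2)

lemma bwd_fst_ne (v : ZMod (m-1) × Fin n) : (bwd m n v).1 ≠ v.1 := by
  rw [bwd]; split_ifs with h
  · rw [h]; exact gmu_ne_zero m hm
  · intro h2; exact one_ne' m hm (by linear_combination -h2)

lemma fwd_ne_bwd (v : ZMod (m-1) × Fin n) : (fwd m n v).1 ≠ (bwd m n v).1 := by
  have hmu := gmu_add_one m hm
  rw [fwd, bwd]; split_ifs with h1 h2 h2
  · exact absurd (h1.symm.trans h2) (gmu_ne_zero m hm)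
  · intro h
    have h' : (0 : ZMod (m-1)) = v.1 - 1 := h
    have hE : v.1 + 1 = 0 := by rw [h1]; exact hmu
    exact two_ne' m hm (by linear_combination hE + h')
  · intro h
    have h' : v.1 + 1 = ((m - 2 : ℕ) : ZMod (m - 1)) := h
    exact two_ne' m hm (by linear_combination hmu + h' - h2)
  · intro h
    have h' : v.1 + 1 = v.1 - 1 := h
    exact two_ne' m hm (by linear_combination h')

omit hm

lemma upv_ne_dnv (v : ZMod (m-1) × Fin n) (hj : 1 ≤ v.2.val) : upv m n v ≠ dnv m n v := by
  have hv := v.2.isLt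
  intro h
  rw [upv, dnv, Prod.ext_iff] at h
  have := congrArg Fin.val h.2
  simp only [] at this
  omega

lemma upv_fst (v : ZMod (m-1) × Fin n) : (upv m n v).1 = v.1 := rfl
lemma dnv_fst (v : ZMod (m-1) × Fin n) : (dnv m n v).1 = v.1 := rfl

include hm

lemma ndeg_GML (hn : 4 ≤ n) (v : ZMod (m-1) × Fin n) :
    ndeg (GML m n) v = if v.2.val = 0 ∨ v.2.val = n-1 then 3 else 4 := by
  have hset : (GML m n).neighborSet v = ↑(nbhd m n v) :=
    Set.ext fun w => adj_iff_mem_nbhd m n hm v w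
  rw [ndeg, hset, Set.ncard_coe_finset]
  have hv := v.2.isLt
  have hfv := fwd_fst_ne m n hm v
  have hbv := bwd_fst_ne m n hm v
  have hfd : fwd m n v ≠ dnv m n v := fun h => hfv (by rw [congrArg Prod.fst h, dnv_fst])
  have hfu : fwd m n v ≠ upv m n v := fun h => hfv (by rw [congrArg Prod.fst h, upv_fst])
  have hbd : bwd m n v ≠ dnv m n v := fun h => hbv (by rw [congrArg Prod.fst h, dnv_fst])
  have hbu : bwd m n v ≠ upv m n v := fun h => hbv (by rw [congrArg Prod.fst h, upv_fst])
  have hfb' : fwd m n v ≠ bwd m n v := fun h => fwd_ne_bwd m n hm v (congrArg Prod.fst h)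
  rcases (show v.2.val = 0 ∨ v.2.val = n-1 ∨ (1 ≤ v.2.val ∧ v.2.val + 1 ≤ n-1) by omega)
    with h0 | h0 | ⟨h1, h2⟩
  · rw [nbhd, if_pos (by omega), if_neg (by omega), Finset.union_empty]
    have he : ({fwd m n v, bwd m n v} : Finset _) ∪ {dnv m n v}
        = {fwd m n v, bwd m n v, dnv m n v} := by
      ext x; simp [or_assoc]
    rw [he, Finset.card_insert_of_notMem (by simp [hfb', hfd]),
      Finset.card_insert_of_notMem (by simp [hbd]), Finset.card_singleton,
      if_pos (Or.inl h0)]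
  · rw [nbhd, if_neg (by omega), if_pos (by omega), Finset.union_empty]
    have he : ({fwd m n v, bwd m n v} : Finset _) ∪ {upv m n v}
        = {fwd m n v, bwd m n v, upv m n v} := by
      ext x; simp [or_assoc]
    rw [he, Finset.card_insert_of_notMem (by simp [hfb', hfu]),
      Finset.card_insert_of_notMem (by simp [hbu]), Finset.card_singleton,
      if_pos (Or.inr h0)]
  · have hud := upv_ne_dnv m n v h1
    rw [nbhd, if_pos (by omega), if_pos (by omega)]
    have he : (({fwd m n v, bwd m n v} : Finset _) ∪ {dnv m n v}) ∪ {upv m n v}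
        = {fwd m n v, bwd m n v, dnv m n v, upv m n v} := by
      ext x; simp [or_assoc]
    rw [he, Finset.card_insert_of_notMem (by simp [hfb', hfd, hfu]),
      Finset.card_insert_of_notMem (by simp [hbd, hbu]),
      Finset.card_insert_of_notMem (by simp [hud.symm]), Finset.card_singleton,
      if_neg (by omega)]

end
/- goodness, direction selectors, conditions -/
section
variable (m n : ℕ)

def goodV (v : ZMod (m-1) × Fin n) : Prop := 1 ≤ v.2.val ∧ v.2.val ≤ n - 2

def xdir (t : ℕ) (v : ZMod (m-1) × Fin n) : ZMod (m-1) × Fin n :=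
  if t = 0 then upv m n v else if t = 1 then fwd m n v
  else if t = 2 then upv m n v else if t = 3 then upv m n v else dnv m n v

def ydir (t : ℕ) (v : ZMod (m-1) × Fin n) : ZMod (m-1) × Fin n :=
  if t = 0 then dnv m n v else if t = 1 then bwd m n v
  else if t = 2 then fwd m n v else if t = 3 then bwd m n v
  else if t = 4 then fwd m n v else bwd m n v

def gcond (j t : ℕ) : Prop :=
  (t = 0 ∧ 2 ≤ j ∧ j ≤ n-3) ∨ (t = 1 ∧ 1 ≤ j ∧ j ≤ n-2) ∨
  ((t = 2 ∨ t = 3) ∧ 2 ≤ j ∧ j ≤ n-2) ∨ ((t = 4 ∨ t = 5) ∧ 1 ≤ j ∧ j ≤ n-3)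

def phi (p : ZMod (m-1) × Fin n × Fin 6) : Sym2 (Sym2 (ZMod (m-1) × Fin n)) :=
  s(s((p.1, p.2.1), xdir m n p.2.2.val (p.1, p.2.1)),
    s((p.1, p.2.1), ydir m n p.2.2.val (p.1, p.2.1)))

variable (hm : 4 ≤ m) (hn : 4 ≤ n)
include hm

lemma adj_fwd (v : ZMod (m-1) × Fin n) : (GML m n).Adj v (fwd m n v) :=
  (adj_iff_mem_nbhd m n hm v _).2 (by rw [nbhd]; simp)

lemma adj_bwd (v : ZMod (m-1) × Fin n) : (GML m n).Adj v (bwd m n v) :=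
  (adj_iff_mem_nbhd m n hm v _).2 (by rw [nbhd]; simp)

lemma adj_dnv (v : ZMod (m-1) × Fin n) (h : v.2.val + 1 ≤ n - 1) :
    (GML m n).Adj v (dnv m n v) :=
  (adj_iff_mem_nbhd m n hm v _).2 (by rw [nbhd]; simp [mem_ite_singleton, h])

lemma adj_upv (v : ZMod (m-1) × Fin n) (h : 1 ≤ v.2.val) :
    (GML m n).Adj v (upv m n v) :=
  (adj_iff_mem_nbhd m n hm v _).2 (by rw [nbhd]; simp [mem_ite_singleton, h])

/-- For interior `v`, the four potential neighbours are pairwise distinct and differ from `v`. -/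
lemma dir_ne (v : ZMod (m-1) × Fin n) (hj : 1 ≤ v.2.val) :
    upv m n v ≠ dnv m n v ∧ upv m n v ≠ fwd m n v ∧ upv m n v ≠ bwd m n v ∧
    dnv m n v ≠ fwd m n v ∧ dnv m n v ≠ bwd m n v ∧ fwd m n v ≠ bwd m n v ∧
    upv m n v ≠ v ∧ fwd m n v ≠ v ∧ bwd m n v ≠ v := by
  have hv := v.2.isLt
  have hfv := fwd_fst_ne m n hm v
  have hbv := bwd_fst_ne m n hm v
  refine ⟨upv_ne_dnv m n v hj, ?_, ?_, ?_, ?_, ?_, ?_, ?_, ?_⟩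
  · exact fun h => hfv (by rw [← congrArg Prod.fst h, upv_fst])
  · exact fun h => hbv (by rw [← congrArg Prod.fst h, upv_fst])
  · exact fun h => hfv (by rw [← congrArg Prod.fst h, dnv_fst])
  · exact fun h => hbv (by rw [← congrArg Prod.fst h, dnv_fst])
  · exact fun h => fwd_ne_bwd m n hm v (congrArg Prod.fst h)
  · intro h
    have := congrArg (fun z => (Prod.snd z).val) h
    simp only [upv] at this
    omega
  · exact fun h => hfv (congrArg Prod.fst h)
  · exact fun h => hbv (congrArg Prod.fst h)

lemma dnv_ne_v' (v : ZMod (m-1) × Fin n) (hj : v.2.val + 1 ≤ n - 1) : dnv m n v ≠ v := by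
  have hv := v.2.isLt
  intro h
  have := congrArg (fun z => (Prod.snd z).val) h
  simp only [dnv] at this
  omega

include hn

lemma ndeg_line_eq_six_iff (e : (GML m n).edgeSet) :
    ndeg (GML m n).lineGraph e = 6 ↔ ∀ v ∈ (e : Sym2 (ZMod (m-1) × Fin n)), goodV m n v := by
  haveI : NeZero (m-1) := ⟨by omega⟩
  obtain ⟨E, hE⟩ := e
  induction E using Sym2.ind with
  | _ a b =>
    have hab : (GML m n).Adj a b := (GML m n).mem_edgeSet.1 hE
    rw [ndeg_lineGraph_eq hab, ndeg_GML m n hm hn a, ndeg_GML m n hm hn b]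
    have ha := a.2.isLt
    have hb := b.2.isLt
    simp only [Sym2.mem_iff, forall_eq_or_imp, forall_eq, goodV]
    split_ifs with h1 h2 h2 <;> omega

end
/- counting tools -/

def rowI (n a b : ℕ) : Finset (Fin n) := Finset.univ.filter (fun j => a ≤ j.val ∧ j.val ≤ b)

lemma card_rowI (n a b : ℕ) (hb : b < n) : (rowI n a b).card = b + 1 - a := by
  have himg : (rowI n a b).image Fin.val = Finset.Icc a b := by
    ext x
    simp only [Finset.mem_image, rowI, Finset.mem_filter, Finset.mem_univ, true_and,
      Finset.mem_Icc]
    constructor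
    · rintro ⟨j, ⟨h1, h2⟩, rfl⟩; exact ⟨h1, h2⟩
    · rintro ⟨h1, h2⟩; exact ⟨⟨x, by omega⟩, ⟨h1, h2⟩, rfl⟩
  have hc := congrArg Finset.card himg
  rw [Finset.card_image_of_injective _ Fin.val_injective, Nat.card_Icc] at hc
  omega

def T2 (n : ℕ) : Finset (Fin n × Fin 6) :=
  (rowI n 2 (n-3)) ×ˢ {(0 : Fin 6)} ∪ (rowI n 1 (n-2)) ×ˢ {(1 : Fin 6)} ∪
  (rowI n 2 (n-2)) ×ˢ {(2 : Fin 6)} ∪ (rowI n 2 (n-2)) ×ˢ {(3 : Fin 6)} ∪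
  (rowI n 1 (n-3)) ×ˢ {(4 : Fin 6)} ∪ (rowI n 1 (n-3)) ×ˢ {(5 : Fin 6)}

lemma mem_T2 (n : ℕ) (q : Fin n × Fin 6) : q ∈ T2 n ↔ gcond n q.1.val q.2.val := by
  have h6 := q.2.isLt
  simp only [T2, rowI, gcond, Finset.mem_union, Finset.mem_product, Finset.mem_filter,
    Finset.mem_univ, true_and, Finset.mem_singleton, Fin.ext_iff]
  simp only [show ((0:Fin 6)).val = 0 from rfl, show ((1:Fin 6)).val = 1 from rfl,
    show ((2:Fin 6)).val = 2 from rfl, show ((3:Fin 6)).val = 3 from rfl,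
    show ((4:Fin 6)).val = 4 from rfl, show ((5:Fin 6)).val = 5 from rfl]
  omega

lemma disj_prod {n : ℕ} {R R' : Finset (Fin n)} {t t' : Fin 6} (h : t ≠ t') :
    Disjoint (R ×ˢ ({t} : Finset (Fin 6))) (R' ×ˢ {t'}) := by
  rw [Finset.disjoint_left]
  rintro ⟨a, b⟩ ha hb
  simp only [Finset.mem_product, Finset.mem_singleton] at ha hb
  exact h (ha.2.symm.trans hb.2)

lemma card_T2 (n : ℕ) (hn : 4 ≤ n) : (T2 n).card = 6*n - 18 := by
  rw [T2]
  rw [Finset.card_union_of_disjoint (by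
    simp only [Finset.disjoint_union_left]
    refine ⟨⟨⟨⟨?_, ?_⟩, ?_⟩, ?_⟩, ?_⟩ <;> exact disj_prod (by decide))]
  rw [Finset.card_union_of_disjoint (by
    simp only [Finset.disjoint_union_left]
    refine ⟨⟨⟨?_, ?_⟩, ?_⟩, ?_⟩ <;> exact disj_prod (by decide))]
  rw [Finset.card_union_of_disjoint (by
    simp only [Finset.disjoint_union_left]
    refine ⟨⟨?_, ?_⟩, ?_⟩ <;> exact disj_prod (by decide))]
  rw [Finset.card_union_of_disjoint (by
    simp only [Finset.disjoint_union_left]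
    refine ⟨?_, ?_⟩ <;> exact disj_prod (by decide))]
  rw [Finset.card_union_of_disjoint (disj_prod (by decide))]
  simp only [Finset.card_product, Finset.card_singleton, mul_one]
  rw [card_rowI n 2 (n-3) (by omega), card_rowI n 1 (n-2) (by omega),
    card_rowI n 2 (n-2) (by omega), card_rowI n 1 (n-3) (by omega)]
  omega
section
variable (m n : ℕ) (hm : 4 ≤ m)

omit hm

lemma good_upv (v : ZMod (m-1) × Fin n) (h2 : 2 ≤ v.2.val) : goodV m n (upv m n v) := by
  have hv := v.2.isLt
  simp only [goodV, upv]
  omega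

lemma good_dnv (v : ZMod (m-1) × Fin n) (h1 : 1 ≤ v.2.val) (h3 : v.2.val ≤ n-3) :
    goodV m n (dnv m n v) := by
  have hv := v.2.isLt
  simp only [goodV, dnv]
  omega

lemma good_fwd (v : ZMod (m-1) × Fin n) (h : goodV m n v) : goodV m n (fwd m n v) := by
  have hv := v.2.isLt
  obtain ⟨h1, h2⟩ := h
  rw [fwd]
  split_ifs <;> simp only [goodV, Fin.val_rev] <;> omega

lemma good_bwd (v : ZMod (m-1) × Fin n) (h : goodV m n v) : goodV m n (bwd m n v) := by
  have hv := v.2.isLt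
  obtain ⟨h1, h2⟩ := h
  rw [bwd]
  split_ifs <;> simp only [goodV, Fin.val_rev] <;> omega

lemma good_dirs (v : ZMod (m-1) × Fin n) (t : ℕ) (hc : gcond n v.2.val t) :
    goodV m n v ∧ goodV m n (xdir m n t v) ∧ goodV m n (ydir m n t v) := by
  have hv := v.2.isLt
  have hgv : goodV m n v := by
    rcases hc with ⟨_, h⟩ | ⟨_, h⟩ | ⟨_, h⟩ | ⟨_, h⟩ <;> exact ⟨by omega, by omega⟩
  refine ⟨hgv, ?_, ?_⟩ <;>
    rcases hc with ⟨rfl, h⟩ | ⟨rfl, h⟩ | ⟨rfl | rfl, h⟩ | ⟨rfl | rfl, h⟩ <;>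
    simp only [xdir, ydir] <;> norm_num <;>
    first
      | exact good_upv m n v (by omega)
      | exact good_dnv m n v (by omega) (by omega)
      | exact good_fwd m n v hgv
      | exact good_bwd m n v hgv

include hm

lemma phi_sides (v : ZMod (m-1) × Fin n) (t : ℕ) (hc : gcond n v.2.val t) :
    v ≠ xdir m n t v ∧ v ≠ ydir m n t v ∧ xdir m n t v ≠ ydir m n t v := by
  have hv := v.2.isLt
  have hj : 1 ≤ v.2.val := by
    rcases hc with ⟨_, h⟩ | ⟨_, h⟩ | ⟨_, h⟩ | ⟨_, h⟩ <;> omega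
  obtain ⟨h1, h2, h3, h4, h5, h6, h7, h8, h9⟩ := dir_ne m n hm v hj
  have hdv : v.2.val ≤ n - 2 → dnv m n v ≠ v := fun h =>
    dnv_ne_v' m n hm v (by omega)
  rcases hc with ⟨rfl, h⟩ | ⟨rfl, h⟩ | ⟨rfl | rfl, h⟩ | ⟨rfl | rfl, h⟩ <;>
    simp only [xdir, ydir] <;> norm_num <;>
    refine ⟨?_, ?_, ?_⟩ <;>
    first
      | exact h7.symm
      | exact h8.symm
      | exact h9.symm
      | exact (hdv (by omega)).symm
      | exact h1
      | exact h2
      | exact h3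
      | exact h4
      | exact h5
      | exact h6
      | exact h1.symm
      | exact h2.symm
      | exact h3.symm
      | exact h4.symm
      | exact h5.symm
      | exact h6.symm

lemma dir_det (v : ZMod (m-1) × Fin n) (t t' : ℕ) (hct : gcond n v.2.val t)
    (hct' : gcond n v.2.val t')
    (hp : (xdir m n t v = xdir m n t' v ∧ ydir m n t v = ydir m n t' v) ∨
          (xdir m n t v = ydir m n t' v ∧ ydir m n t v = xdir m n t' v)) : t = t' := by
  have hj : 1 ≤ v.2.val := by
    rcases hct with ⟨_, h⟩ | ⟨_, h⟩ | ⟨_, h⟩ | ⟨_, h⟩ <;> omega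
  obtain ⟨h1, h2, h3, h4, h5, h6, -, -, -⟩ := dir_ne m n hm v hj
  have h1' := h1.symm; have h2' := h2.symm; have h3' := h3.symm
  have h4' := h4.symm; have h5' := h5.symm; have h6' := h6.symm
  rcases hct with ⟨rfl, -⟩ | ⟨rfl, -⟩ | ⟨rfl | rfl, -⟩ | ⟨rfl | rfl, -⟩ <;>
    rcases hct' with ⟨rfl, -⟩ | ⟨rfl, -⟩ | ⟨rfl | rfl, -⟩ | ⟨rfl | rfl, -⟩ <;>
    simp_all [xdir, ydir]

end
lemma fv0 : ((0 : Fin 6) : ℕ) = 0 := rfl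
lemma fv1 : ((1 : Fin 6) : ℕ) = 1 := rfl
lemma fv2 : ((2 : Fin 6) : ℕ) = 2 := rfl
lemma fv3 : ((3 : Fin 6) : ℕ) = 3 := rfl
lemma fv4 : ((4 : Fin 6) : ℕ) = 4 := rfl
lemma fv5 : ((5 : Fin 6) : ℕ) = 5 := rfl

section
variable (m n : ℕ) (hm : 4 ≤ m) (hn : 4 ≤ n)
include hm hn

lemma mem_S_pair {v x y : ZMod (m-1) × Fin n} (hx : (GML m n).Adj v x)
    (hy : (GML m n).Adj v y) (hxy : x ≠ y)
    (hgv : goodV m n v) (hgx : goodV m n x) (hgy : goodV m n y) :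
    s(s(v,x),s(v,y)) ∈ Sym2.map Subtype.val ''
      {E | E ∈ ((GML m n).lineGraph).edgeSet ∧ ∀ e ∈ E, ndeg (GML m n).lineGraph e = 6} := by
  refine ⟨s(⟨s(v,x), hx⟩, ⟨s(v,y), hy⟩), ⟨?_, ?_⟩, by rw [Sym2.map_pair_eq]⟩
  · rw [mem_edgeSet, lineGraph_adj_iff_exists]
    refine ⟨?_, v, by simp, by simp⟩
    intro hEq
    have h2 := congrArg Subtype.val hEq
    simp only [Sym2.eq_iff] at h2
    rcases h2 with ⟨-, h2⟩ | ⟨-, h2⟩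
    · exact hxy h2
    · exact hx.ne h2.symm
  · intro e he
    rw [ndeg_line_eq_six_iff m n hm hn]
    rw [Sym2.mem_iff] at he
    rcases he with rfl | rfl <;> intro w hw <;> rw [Sym2.mem_iff] at hw <;>
      rcases hw with rfl | rfl <;> assumption

lemma gml_count :
    {E | E ∈ ((GML m n).lineGraph).edgeSet ∧ ∀ e ∈ E, ndeg (GML m n).lineGraph e = 6}.ncard
      = (m-1) * (6*n - 18) := by
  classical
  haveI : NeZero (m-1) := ⟨by omega⟩
  set S := {E | E ∈ ((GML m n).lineGraph).edgeSet ∧ ∀ e ∈ E, ndeg (GML m n).lineGraph e = 6}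
    with hS
  have hψ : Function.Injective
      (Sym2.map (Subtype.val : (GML m n).edgeSet → Sym2 (ZMod (m-1) × Fin n))) :=
    Sym2.map.injective Subtype.val_injective
  have hinj : Set.InjOn (phi m n)
      ↑((Finset.univ : Finset (ZMod (m-1))) ×ˢ T2 n) := by
    rintro ⟨i, j, t⟩ hp ⟨i', j', t'⟩ hq h
    rw [Finset.mem_coe, Finset.mem_product] at hp hq
    have hcp : gcond n j.val t.val := (mem_T2 n (j, t)).1 hp.2
    have hcq : gcond n j'.val t'.val := (mem_T2 n (j', t')).1 hq.2
    obtain ⟨hp1, hp2, hp3⟩ := phi_sides m n hm (i, j) t.val hcp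
    obtain ⟨hq1, hq2, hq3⟩ := phi_sides m n hm (i', j') t'.val hcq
    simp only [phi] at h
    obtain ⟨hvv, hpair⟩ := sym2_pair_eq h hp3 hq3 hp1 hp2 hq1 hq2
    obtain ⟨rfl, rfl⟩ := Prod.mk.injEq .. ▸ hvv
    have ht : t.val = t'.val := dir_det m n hm (i, j) t.val t'.val hcp hcq hpair
    rw [Fin.val_inj] at ht
    rw [ht]
  have himg : Sym2.map Subtype.val '' S =
      ↑((((Finset.univ : Finset (ZMod (m-1))) ×ˢ T2 n)).image (phi m n)) := by
    ext P
    constructor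
    · rintro ⟨E, hES, rfl⟩
      induction E using Sym2.ind with
      | _ e₁ e₂ =>
        obtain ⟨hEdge, h6⟩ := hES
        rw [mem_edgeSet, lineGraph_adj_iff_exists] at hEdge
        obtain ⟨hne, v, hv1, hv2⟩ := hEdge
        have hg1 : ∀ w ∈ (e₁ : Sym2 (ZMod (m-1) × Fin n)), goodV m n w :=
          (ndeg_line_eq_six_iff m n hm hn e₁).1 (h6 e₁ (by simp))
        have hg2 : ∀ w ∈ (e₂ : Sym2 (ZMod (m-1) × Fin n)), goodV m n w :=
          (ndeg_line_eq_six_iff m n hm hn e₂).1 (h6 e₂ (by simp))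
        obtain ⟨x, hx1⟩ := Sym2.mem_iff_exists.1 hv1
        obtain ⟨y, hy1⟩ := Sym2.mem_iff_exists.1 hv2
        have hax : (GML m n).Adj v x := (GML m n).mem_edgeSet.1 (hx1 ▸ e₁.2)
        have hay : (GML m n).Adj v y := (GML m n).mem_edgeSet.1 (hy1 ▸ e₂.2)
        have hxy : x ≠ y := by
          rintro rfl; exact hne (Subtype.ext (hx1.trans hy1.symm))
        have hgv : goodV m n v := hg1 v (by rw [hx1]; simp)
        have hgx : goodV m n x := hg1 x (by rw [hx1]; simp)
        have hgy : goodV m n y := hg2 y (by rw [hy1]; simp)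
        obtain ⟨hgv1, hgv2⟩ := hgv
        have hvlt := v.2.isLt
        have hxm := (adj_iff_mem_nbhd m n hm v x).1 hax
        have hym := (adj_iff_mem_nbhd m n hm v y).1 hay
        rw [nbhd] at hxm hym
        simp only [Finset.mem_union, Finset.mem_insert, Finset.mem_singleton,
          mem_ite_singleton] at hxm hym
        rw [Sym2.map_pair_eq, hx1, hy1, Finset.mem_coe, Finset.mem_image]
        rcases hxm with ((rfl | rfl) | ⟨hcx, rfl⟩) | ⟨hcx, rfl⟩ <;>
          rcases hym with ((rfl | rfl) | ⟨hcy, rfl⟩) | ⟨hcy, rfl⟩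
        · exact absurd rfl hxy
        · -- x = fwd, y = bwd, t = 1
          refine ⟨(v.1, v.2, (1 : Fin 6)), Finset.mem_product.2 ⟨Finset.mem_univ _,
            (mem_T2 n (v.2, 1)).2 (show gcond n v.2.val 1 from Or.inr (Or.inl ⟨rfl, by omega, by omega⟩))⟩, ?_⟩
          simp only [phi, xdir, ydir, Prod.mk.eta, fv1] <;>
            first | rfl | exact Sym2.eq_swap
        · -- x = fwd, y = dnv, t = 4 (swap)
          have hdy : v.2.val ≤ n - 3 := by
            have h2 : min (v.2.val + 1) (n-1) ≤ n - 2 := hgy.2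
            by_cases hle : v.2.val + 1 ≤ n - 1
            · rw [min_eq_left hle] at h2; omega
            · rw [min_eq_right (by omega)] at h2; omega
          refine ⟨(v.1, v.2, (4 : Fin 6)), Finset.mem_product.2 ⟨Finset.mem_univ _,
            (mem_T2 n (v.2, 4)).2 (show gcond n v.2.val 4 from Or.inr (Or.inr (Or.inr ⟨Or.inl rfl, by omega, by omega⟩)))⟩, ?_⟩
          simp only [phi, xdir, ydir, Prod.mk.eta, fv4] <;>
            first | rfl | exact Sym2.eq_swap
        · -- x = fwd, y = upv, t = 2 (swap)
          have huy : 1 ≤ v.2.val - 1 := hgy.1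
          refine ⟨(v.1, v.2, (2 : Fin 6)), Finset.mem_product.2 ⟨Finset.mem_univ _,
            (mem_T2 n (v.2, 2)).2 (show gcond n v.2.val 2 from Or.inr (Or.inr (Or.inl ⟨Or.inl rfl, by omega, by omega⟩)))⟩, ?_⟩
          simp only [phi, xdir, ydir, Prod.mk.eta, fv2] <;>
            first | rfl | exact Sym2.eq_swap
        · -- x = bwd, y = fwd, t = 1 (swap)
          refine ⟨(v.1, v.2, (1 : Fin 6)), Finset.mem_product.2 ⟨Finset.mem_univ _,
            (mem_T2 n (v.2, 1)).2 (show gcond n v.2.val 1 from Or.inr (Or.inl ⟨rfl, by omega, by omega⟩))⟩, ?_⟩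
          simp only [phi, xdir, ydir, Prod.mk.eta, fv1] <;>
            first | rfl | exact Sym2.eq_swap
        · exact absurd rfl hxy
        · -- x = bwd, y = dnv, t = 5 (swap)
          have hdy : v.2.val ≤ n - 3 := by
            have h2 : min (v.2.val + 1) (n-1) ≤ n - 2 := hgy.2
            by_cases hle : v.2.val + 1 ≤ n - 1
            · rw [min_eq_left hle] at h2; omega
            · rw [min_eq_right (by omega)] at h2; omega
          refine ⟨(v.1, v.2, (5 : Fin 6)), Finset.mem_product.2 ⟨Finset.mem_univ _,
            (mem_T2 n (v.2, 5)).2 (show gcond n v.2.val 5 from Or.inr (Or.inr (Or.inr ⟨Or.inr rfl, by omega, by omega⟩)))⟩, ?_⟩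
          simp only [phi, xdir, ydir, Prod.mk.eta, fv5] <;>
            first | rfl | exact Sym2.eq_swap
        · -- x = bwd, y = upv, t = 3 (swap)
          have huy : 1 ≤ v.2.val - 1 := hgy.1
          refine ⟨(v.1, v.2, (3 : Fin 6)), Finset.mem_product.2 ⟨Finset.mem_univ _,
            (mem_T2 n (v.2, 3)).2 (show gcond n v.2.val 3 from Or.inr (Or.inr (Or.inl ⟨Or.inr rfl, by omega, by omega⟩)))⟩, ?_⟩
          simp only [phi, xdir, ydir, Prod.mk.eta, fv3] <;>
            first | rfl | exact Sym2.eq_swap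
        · -- x = dnv, y = fwd, t = 4
          have hdx : v.2.val ≤ n - 3 := by
            have h2 : min (v.2.val + 1) (n-1) ≤ n - 2 := hgx.2
            by_cases hle : v.2.val + 1 ≤ n - 1
            · rw [min_eq_left hle] at h2; omega
            · rw [min_eq_right (by omega)] at h2; omega
          refine ⟨(v.1, v.2, (4 : Fin 6)), Finset.mem_product.2 ⟨Finset.mem_univ _,
            (mem_T2 n (v.2, 4)).2 (show gcond n v.2.val 4 from Or.inr (Or.inr (Or.inr ⟨Or.inl rfl, by omega, by omega⟩)))⟩, ?_⟩
          simp only [phi, xdir, ydir, Prod.mk.eta, fv4] <;>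
            first | rfl | exact Sym2.eq_swap
        · -- x = dnv, y = bwd, t = 5
          have hdx : v.2.val ≤ n - 3 := by
            have h2 : min (v.2.val + 1) (n-1) ≤ n - 2 := hgx.2
            by_cases hle : v.2.val + 1 ≤ n - 1
            · rw [min_eq_left hle] at h2; omega
            · rw [min_eq_right (by omega)] at h2; omega
          refine ⟨(v.1, v.2, (5 : Fin 6)), Finset.mem_product.2 ⟨Finset.mem_univ _,
            (mem_T2 n (v.2, 5)).2 (show gcond n v.2.val 5 from Or.inr (Or.inr (Or.inr ⟨Or.inr rfl, by omega, by omega⟩)))⟩, ?_⟩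
          simp only [phi, xdir, ydir, Prod.mk.eta, fv5] <;>
            first | rfl | exact Sym2.eq_swap
        · exact absurd rfl hxy
        · -- x = dnv, y = upv, t = 0 (swap)
          have huy : 1 ≤ v.2.val - 1 := hgy.1
          have hdx : v.2.val ≤ n - 3 := by
            have h2 : min (v.2.val + 1) (n-1) ≤ n - 2 := hgx.2
            by_cases hle : v.2.val + 1 ≤ n - 1
            · rw [min_eq_left hle] at h2; omega
            · rw [min_eq_right (by omega)] at h2; omega
          refine ⟨(v.1, v.2, (0 : Fin 6)), Finset.mem_product.2 ⟨Finset.mem_univ _,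
            (mem_T2 n (v.2, 0)).2 (show gcond n v.2.val 0 from Or.inl ⟨rfl, by omega, by omega⟩)⟩, ?_⟩
          simp only [phi, xdir, ydir, Prod.mk.eta, fv0] <;>
            first | rfl | exact Sym2.eq_swap
        · -- x = upv, y = fwd, t = 2
          have hux : 1 ≤ v.2.val - 1 := hgx.1
          refine ⟨(v.1, v.2, (2 : Fin 6)), Finset.mem_product.2 ⟨Finset.mem_univ _,
            (mem_T2 n (v.2, 2)).2 (show gcond n v.2.val 2 from Or.inr (Or.inr (Or.inl ⟨Or.inl rfl, by omega, by omega⟩)))⟩, ?_⟩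
          simp only [phi, xdir, ydir, Prod.mk.eta, fv2] <;>
            first | rfl | exact Sym2.eq_swap
        · -- x = upv, y = bwd, t = 3
          have hux : 1 ≤ v.2.val - 1 := hgx.1
          refine ⟨(v.1, v.2, (3 : Fin 6)), Finset.mem_product.2 ⟨Finset.mem_univ _,
            (mem_T2 n (v.2, 3)).2 (show gcond n v.2.val 3 from Or.inr (Or.inr (Or.inl ⟨Or.inr rfl, by omega, by omega⟩)))⟩, ?_⟩
          simp only [phi, xdir, ydir, Prod.mk.eta, fv3] <;>
            first | rfl | exact Sym2.eq_swap
        · -- x = upv, y = dnv, t = 0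
          have hux : 1 ≤ v.2.val - 1 := hgx.1
          have hdy : v.2.val ≤ n - 3 := by
            have h2 : min (v.2.val + 1) (n-1) ≤ n - 2 := hgy.2
            by_cases hle : v.2.val + 1 ≤ n - 1
            · rw [min_eq_left hle] at h2; omega
            · rw [min_eq_right (by omega)] at h2; omega
          refine ⟨(v.1, v.2, (0 : Fin 6)), Finset.mem_product.2 ⟨Finset.mem_univ _,
            (mem_T2 n (v.2, 0)).2 (show gcond n v.2.val 0 from Or.inl ⟨rfl, by omega, by omega⟩)⟩, ?_⟩
          simp only [phi, xdir, ydir, Prod.mk.eta, fv0] <;>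
            first | rfl | exact Sym2.eq_swap
        · exact absurd rfl hxy
    · rintro hP
      rw [Finset.mem_coe, Finset.mem_image] at hP
      obtain ⟨⟨i, j, t⟩, hmem, rfl⟩ := hP
      rw [Finset.mem_product] at hmem
      have hc : gcond n j.val t.val := (mem_T2 n (j, t)).1 hmem.2
      obtain ⟨hgv, hgx, hgy⟩ := good_dirs m n (i, j) t.val hc
      obtain ⟨hp1, hp2, hp3⟩ := phi_sides m n hm (i, j) t.val hc
      have hax : (GML m n).Adj (i, j) (xdir m n t.val (i, j)) := by
        rcases hc with ⟨he, h⟩ | ⟨he, h⟩ | ⟨(he | he) , h⟩ | ⟨(he | he), h⟩ <;>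
          simp only [xdir, he] <;> norm_num <;>
          first
            | exact adj_upv m n hm (i, j) (by show (1:ℕ) ≤ j.val; omega)
            | exact adj_dnv m n hm (i, j) (by show j.val + 1 ≤ n - 1; omega)
            | exact adj_fwd m n hm (i, j)
            | exact adj_bwd m n hm (i, j)
      have hay : (GML m n).Adj (i, j) (ydir m n t.val (i, j)) := by
        rcases hc with ⟨he, h⟩ | ⟨he, h⟩ | ⟨(he | he) , h⟩ | ⟨(he | he), h⟩ <;>
          simp only [ydir, he] <;> norm_num <;>
          first
            | exact adj_upv m n hm (i, j) (by show (1:ℕ) ≤ j.val; omega)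
            | exact adj_dnv m n hm (i, j) (by show j.val + 1 ≤ n - 1; omega)
            | exact adj_fwd m n hm (i, j)
            | exact adj_bwd m n hm (i, j)
      have := mem_S_pair m n hm hn hax hay hp3 hgv hgx hgy
      simpa [phi, hS] using this
  rw [hS] at himg ⊢
  rw [← Set.ncard_image_of_injective _ hψ, himg, Set.ncard_coe_finset,
    Finset.card_image_of_injOn hinj, Finset.card_product, Finset.card_univ, ZMod.card,
    card_T2 n hn]

end

/-- In `L(M_{m,n})` (`m, n ≥ 4`), the number of edges both of whose endpoints have
degree 6 equals `(m−1)[(n−2) + (n−4) + 4(n−3)] = 6(m−1)(n−3)`. -/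
theorem gml_line_edges66 (m n : ℕ) (hm : 4 ≤ m) (hn : 4 ≤ n) :
    ({E | E ∈ ((GML m n).lineGraph).edgeSet ∧ ∀ e ∈ E, ndeg (GML m n).lineGraph e = 6}.ncard : ℤ)
        = ((m : ℤ) - 1) * (((n : ℤ) - 2) + ((n : ℤ) - 4) + 4 * ((n : ℤ) - 3))
      ∧ ((m : ℤ) - 1) * (((n : ℤ) - 2) + ((n : ℤ) - 4) + 4 * ((n : ℤ) - 3))
        = 6 * ((m : ℤ) - 1) * ((n : ℤ) - 3) := by
  constructor
  · rw [gml_count m n hm hn, Nat.cast_mul, Nat.cast_sub (by omega : (1:ℕ) ≤ m),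
      Nat.cast_sub (by omega : (18:ℕ) ≤ 6*n)]
    push_cast
    ring
  · ring
end
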